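/- arXiv:cs/0701057 — 5 statements merged into one kernel-verified Lean document; each statement's English description precedes it below -/
import Mathlib

section
/- For every cooperation strength λ ∈ [0,1) and every propagation matrix W (nonnegative with unit column sums), the basic cooperative optimization update T_λ has exactly one fixed point: there exists a unique state Ψ^{(∞)} = (Ψ^{(∞)}_1,…,Ψ^{(∞)}_n) such that T_λ(Ψ^{(∞)}) = Ψ^{(∞)}, i.e., the n difference equations Ψ^{(∞)}_i(a) = min_{x : x_i = a} ((1−λ) E_i(x) + λ ∑_{j=1}^n w_{ij} Ψ^{(∞)}_j(x_j)) have one and only one solution. -/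
open Finset Filter Topology

/-- A propagation matrix: nonnegative entries with unit column sums. -/
def IsPropagationMatrix {n : ℕ} (W : Fin n → Fin n → ℝ) : Prop :=
  (∀ i j, 0 ≤ W i j) ∧ ∀ j, ∑ i, W i j = 1

/-- The basic cooperative optimization update `T_λ`:
`T_λ(Ψ)_i(a) = min_{x : x_i = a} ((1−λ) E_i(x) + λ ∑_j w_{ij} Ψ_j(x_j))`. -/
noncomputable def coopT {n : ℕ} {D : Fin n → Type} [∀ i, Fintype (D i)]
    [∀ i, Nonempty (D i)]
    (E : Fin n → ((i : Fin n) → D i) → ℝ) (W : Fin n → Fin n → ℝ) (lam : ℝ)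
    (Ψ : (i : Fin n) → D i → ℝ) : (i : Fin n) → D i → ℝ :=
  fun i a =>
    Finset.univ.inf' Finset.univ_nonempty
      (fun x : (j : Fin n) → D j =>
        (1 - lam) * E i (Function.update x i a) +
          lam * ∑ j, W i j * Ψ j (Function.update x i a j))

/-- The total objective `E(x) = ∑ i, E_i(x)`. -/
def objective {n : ℕ} {D : Fin n → Type}
    (E : Fin n → ((i : Fin n) → D i) → ℝ) (x : (i : Fin n) → D i) : ℝ :=
  ∑ i, E i x

/-- `x̃` is a consensus solution with respect to the state `Ψ` and cooperation strength
`lam`: for every `i`, `x̃` globally minimizes the modified sub-objective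
`x ↦ (1−λ) E_i(x) + λ ∑_j w_{ij} Ψ_j(x_j)`. -/
def IsConsensusState {n : ℕ} {D : Fin n → Type}
    (E : Fin n → ((i : Fin n) → D i) → ℝ) (W : Fin n → Fin n → ℝ) (lam : ℝ)
    (Ψ : (i : Fin n) → D i → ℝ) (xt : (i : Fin n) → D i) : Prop :=
  ∀ i, ∀ x : (j : Fin n) → D j,
    (1 - lam) * E i xt + lam * ∑ j, W i j * Ψ j (xt j)
      ≤ (1 - lam) * E i x + lam * ∑ j, W i j * Ψ j (x j)

/-!
The update `T_λ` is a `λ`-contraction for the distance `∑ᵢ ‖Ψᵢ - Φᵢ‖_∞` (the ℓ¹ sum of the sup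
norms of the components): taking a minimum is 1-Lipschitz in the sup norm, so component `i` moves
by at most `λ ∑ⱼ w_{ij} ‖Ψⱼ - Φⱼ‖_∞`, and summing over `i` the unit column sums of `W` give the
factor `λ`. Banach's fixed point theorem then yields exactly one fixed point.
-/

theorem Finset.inf'_le_inf'_add {ι α : Type*} [AddCommGroup α] [LinearOrder α]
    [IsOrderedAddMonoid α] {s : Finset ι} (hs : s.Nonempty) {f g : ι → α} {c : α}
    (h : ∀ x ∈ s, f x ≤ g x + c) : s.inf' hs f ≤ s.inf' hs g + c := by
  obtain ⟨y, hy, hgy⟩ := s.exists_mem_eq_inf' hs g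
  rw [hgy]
  exact (s.inf'_le f hy).trans (h y hy)

theorem Finset.abs_inf'_sub_inf'_le {ι α : Type*} [AddCommGroup α] [LinearOrder α]
    [IsOrderedAddMonoid α] {s : Finset ι} (hs : s.Nonempty) {f g : ι → α} {c : α}
    (h : ∀ x ∈ s, |f x - g x| ≤ c) : |s.inf' hs f - s.inf' hs g| ≤ c := by
  simp_rw [abs_sub_le_iff, sub_le_iff_le_add'] at h ⊢
  exact ⟨s.inf'_le_inf'_add hs fun x hx => (h x hx).1, s.inf'_le_inf'_add hs fun x hx => (h x hx).2⟩

section coopT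

variable {n : ℕ} {D : Fin n → Type} [∀ i, Fintype (D i)] [∀ i, Nonempty (D i)]
  (E : Fin n → ((i : Fin n) → D i) → ℝ) {W : Fin n → Fin n → ℝ} {lam : ℝ}

theorem dist_coopT_apply_le (hW : ∀ i j, 0 ≤ W i j) (hlam : 0 ≤ lam)
    (Ψ Φ : (i : Fin n) → D i → ℝ) (i : Fin n) :
    dist (coopT E W lam Ψ i) (coopT E W lam Φ i) ≤ lam * ∑ j, W i j * dist (Ψ j) (Φ j) := by
  have hbound : 0 ≤ lam * ∑ j, W i j * dist (Ψ j) (Φ j) :=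
    mul_nonneg hlam (sum_nonneg fun j _ => mul_nonneg (hW i j) dist_nonneg)
  refine (dist_pi_le_iff hbound).2 fun a => ?_
  rw [Real.dist_eq]
  refine Finset.abs_inf'_sub_inf'_le _ fun x _ => ?_
  set y := Function.update x i a
  calc |(1 - lam) * E i y + lam * ∑ j, W i j * Ψ j (y j)
        - ((1 - lam) * E i y + lam * ∑ j, W i j * Φ j (y j))|
      = |lam * ∑ j, W i j * (Ψ j (y j) - Φ j (y j))| := by
        congr 1
        simp only [mul_sub, sum_sub_distrib]
        ring
    _ = lam * |∑ j, W i j * (Ψ j (y j) - Φ j (y j))| := by rw [abs_mul, abs_of_nonneg hlam]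
    _ ≤ lam * ∑ j, W i j * dist (Ψ j) (Φ j) := by
        refine mul_le_mul_of_nonneg_left ((abs_sum_le_sum_abs _ _).trans
          (sum_le_sum fun j _ => ?_)) hlam
        rw [abs_mul, abs_of_nonneg (hW i j), ← Real.dist_eq]
        exact mul_le_mul_of_nonneg_left (dist_le_pi_dist _ _ _) (hW i j)

theorem sum_dist_coopT_le (hW : IsPropagationMatrix W) (hlam : 0 ≤ lam)
    (Ψ Φ : (i : Fin n) → D i → ℝ) :
    ∑ i, dist (coopT E W lam Ψ i) (coopT E W lam Φ i) ≤ lam * ∑ i, dist (Ψ i) (Φ i) :=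
  calc ∑ i, dist (coopT E W lam Ψ i) (coopT E W lam Φ i)
      ≤ ∑ i, lam * ∑ j, W i j * dist (Ψ j) (Φ j) :=
        sum_le_sum fun i _ => dist_coopT_apply_le E hW.1 hlam Ψ Φ i
    _ = lam * ∑ j, (∑ i, W i j) * dist (Ψ j) (Φ j) := by
        rw [← mul_sum, sum_comm]
        simp only [sum_mul]
    _ = lam * ∑ j, dist (Ψ j) (Φ j) := by simp only [hW.2, one_mul]

theorem contractingWith_coopT (hW : IsPropagationMatrix W) (hlam0 : 0 ≤ lam) (hlam1 : lam < 1) :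
    ContractingWith lam.toNNReal
      (fun Ψ : PiLp 1 (fun i => D i → ℝ) => WithLp.toLp 1 (coopT E W lam Ψ.ofLp)) := by
  refine ⟨by simpa using hlam1, LipschitzWith.of_dist_le_mul fun Ψ Φ => ?_⟩
  simp only [PiLp.dist_eq_of_L1, Real.coe_toNNReal _ hlam0]
  exact sum_dist_coopT_le E hW hlam0 Ψ Φ

end coopT

theorem unique_equilibrium_general (n : ℕ) (D : Fin n → Type)
    [∀ i, Fintype (D i)] [∀ i, Nonempty (D i)]
    (E : Fin n → ((i : Fin n) → D i) → ℝ) (W : Fin n → Fin n → ℝ)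
    (hW : IsPropagationMatrix W) (lam : ℝ) (hlam0 : 0 ≤ lam) (hlam1 : lam < 1) :
    ∃! Ψ : (i : Fin n) → D i → ℝ, coopT E W lam Ψ = Ψ := by
  have hT := contractingWith_coopT E hW hlam0 hlam1
  refine ⟨(hT.fixedPoint _).ofLp, congrArg WithLp.ofLp hT.fixedPoint_isFixedPt, fun Ψ hΨ => ?_⟩
  exact congrArg WithLp.ofLp (hT.fixedPoint_unique (congrArg (WithLp.toLp 1) hΨ))

/-- For every cooperation strength `λ ∈ [0,1)` and every propagation
matrix `W`, the basic cooperative optimization update `T_λ` has exactly one fixed point. -/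
theorem unique_equilibrium (n : ℕ) (hn : 1 ≤ n) (D : Fin n → Type)
    [∀ i, Fintype (D i)] [∀ i, Nonempty (D i)]
    (E : Fin n → ((i : Fin n) → D i) → ℝ) (W : Fin n → Fin n → ℝ)
    (hW : IsPropagationMatrix W) (lam : ℝ) (hlam0 : 0 ≤ lam) (hlam1 : lam < 1) :
    ∃! Ψ : (i : Fin n) → D i → ℝ, coopT E W lam Ψ = Ψ :=
  unique_equilibrium_general n D E W hW lam hlam0 hlam1
end

section
/- Let (λ_k)_{k≥1} be a sequence in [0,1), W a propagation matrix, and let the iterates start from the initial state Ψ^{(0)}_i ≡ 0 for every i (or, alternatively, with λ_1 = 0). Suppose there exist k_1 ≥ 1 and ε > 0 such that 1 − λ_k ≥ ε for all k ≥ k_1, and a configuration x̃ is a consensus solution at every iteration k ≥ k_1. Then E(x̃) = E*, i.e., x̃ is a global minimum of E. -/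
open Finset Filter Topology

/-!
Summing the update over `i` and using that the columns of `W` sum to one, the totals
`Φ_k(x) = ∑ i, Ψ_i^{(k)}(x_i)` satisfy `Φ_{k+1}(x) ≤ (1 - λ_{k+1}) E(x) + λ_{k+1} Φ_k(x)`, hence
`Φ_k ≤ c_k E` for `k ≥ 1` and the weights `c_0 = 0`, `c_{k+1} = (1 - λ_{k+1}) + λ_{k+1} c_k`.
At a consensus solution `x̃` the minimum defining `Ψ_i^{(k)}(x̃_i)` is attained at `x̃` itself, so the recursion is
an equality at `x̃`: the gap `u_k = c_k E(x̃) - Φ_k(x̃)` contracts by the factor `λ_k ≤ 1 - ε`.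
Comparing with an arbitrary `x` gives `u_k ≥ c_k (E(x̃) - E(x)) ≥ ε (E(x̃) - E(x))`, and letting
`k → ∞` yields `E(x̃) ≤ E(x)`.
-/

/-- The weight `c_k` of the objective accumulated in the totals after `k` updates;
`c_k = 1 - λ_1 ⋯ λ_k`. -/
def coopWeight (lam : ℕ → ℝ) : ℕ → ℝ
  | 0 => 0
  | k + 1 => (1 - lam (k + 1)) + lam (k + 1) * coopWeight lam k

section Weight

variable {lam : ℕ → ℝ}

theorem coopWeight_succ (k : ℕ) :
    coopWeight lam (k + 1) = (1 - lam (k + 1)) + lam (k + 1) * coopWeight lam k :=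
  rfl

theorem coopWeight_nonneg (hlam₀ : ∀ k, 0 ≤ lam k) (hlam₁ : ∀ k, lam k ≤ 1) (k : ℕ) :
    0 ≤ coopWeight lam k := by
  induction k with
  | zero => exact le_rfl
  | succ k ih =>
    exact add_nonneg (sub_nonneg.mpr (hlam₁ _)) (mul_nonneg (hlam₀ _) ih)

theorem one_sub_le_coopWeight_succ (hlam₀ : ∀ k, 0 ≤ lam k) (hlam₁ : ∀ k, lam k ≤ 1)
    (k : ℕ) : 1 - lam (k + 1) ≤ coopWeight lam (k + 1) :=
  le_add_of_nonneg_right <| mul_nonneg (hlam₀ _) (coopWeight_nonneg hlam₀ hlam₁ k)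

end Weight

theorem nonpos_of_forall_le_pow_mul {a r C : ℝ} (hr₀ : 0 ≤ r) (hr₁ : r < 1)
    (h : ∀ m : ℕ, a ≤ r ^ m * C) : a ≤ 0 :=
  ge_of_tendsto' (by simpa using (tendsto_pow_atTop_nhds_zero_of_lt_one hr₀ hr₁).mul_const C) h

section Recursion

variable {X : Type*} {lam : ℕ → ℝ} {Φ : ℕ → X → ℝ} {F : X → ℝ}

theorem le_coopWeight_mul_of_step_le (hlam₀ : ∀ k, 0 ≤ lam k)
    (hstep : ∀ k x, Φ (k + 1) x ≤ (1 - lam (k + 1)) * F x + lam (k + 1) * Φ k x)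
    (hinit : ∀ x, lam 1 * Φ 0 x ≤ 0) (k : ℕ) (x : X) :
    (1 - lam (k + 1)) * F x + lam (k + 1) * Φ k x ≤ coopWeight lam (k + 1) * F x := by
  induction k generalizing x with
  | zero =>
    simp only [coopWeight, mul_zero, add_zero]
    linarith [hinit x]
  | succ k ih =>
    have hprev : lam (k + 2) * Φ (k + 1) x ≤ lam (k + 2) * (coopWeight lam (k + 1) * F x) :=
      mul_le_mul_of_nonneg_left ((hstep k x).trans (ih x)) (hlam₀ _)
    rw [coopWeight_succ]
    linear_combination hprev

theorem le_of_eventually_step_eq (hlam₀ : ∀ k, 0 ≤ lam k) (hlam₁ : ∀ k, lam k ≤ 1)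
    (hbound : ∀ k x,
      (1 - lam (k + 1)) * F x + lam (k + 1) * Φ k x ≤ coopWeight lam (k + 1) * F x)
    {k₁ : ℕ} {ε : ℝ} (hε : 0 < ε) (heps : ∀ k, k₁ ≤ k → ε ≤ 1 - lam k) {xt : X}
    (heq : ∀ k, k₁ ≤ k → Φ (k + 1) xt = (1 - lam (k + 1)) * F xt + lam (k + 1) * Φ k xt)
    (hle : ∀ k, k₁ ≤ k → ∀ x, Φ (k + 1) xt ≤ (1 - lam (k + 1)) * F x + lam (k + 1) * Φ k x)
    (x : X) : F xt ≤ F x := by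
  by_contra! hlt
  set u : ℕ → ℝ := fun k => coopWeight lam k * F xt - Φ k xt
  have hδ : 0 < ε * (F xt - F x) := mul_pos hε (sub_pos.mpr hlt)
  have hrec : ∀ k, k₁ ≤ k → u (k + 1) = lam (k + 1) * u k := fun k hk => by
    simp only [u, heq k hk, coopWeight_succ]
    ring
  have hlow : ∀ k, k₁ ≤ k → ε * (F xt - F x) ≤ u (k + 1) := fun k hk => by
    have hw : ε ≤ coopWeight lam (k + 1) :=
      (heps (k + 1) (by omega)).trans (one_sub_le_coopWeight_succ hlam₀ hlam₁ k)
    have hΦ : Φ (k + 1) xt ≤ coopWeight lam (k + 1) * F x := (hle k hk x).trans (hbound k x)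
    have := mul_le_mul_of_nonneg_right hw (sub_pos.mpr hlt).le
    simp only [u]
    linarith
  have hr₀ : 0 ≤ 1 - ε := (hlam₀ k₁).trans (by linarith [heps k₁ le_rfl])
  have hdecay (m : ℕ) : u (k₁ + m + 1 + 1) ≤ (1 - ε) * u (k₁ + m + 1) := by
    rw [hrec _ (by omega)]
    exact mul_le_mul_of_nonneg_right (by linarith [heps (k₁ + m + 1 + 1) (by omega)])
      (hδ.le.trans (hlow _ (by omega)))
  refine hδ.not_ge (nonpos_of_forall_le_pow_mul (C := u (k₁ + 1)) hr₀ (by linarith) fun m => ?_)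
  exact (hlow (k₁ + m) (by omega)).trans
    (le_geom (u := fun m => u (k₁ + m + 1)) hr₀ m fun m _ => hdecay m)

end Recursion

/-- The paper's modified sub-objective `Ẽ_i`. -/
def modifiedObjective {n : ℕ} {D : Fin n → Type}
    (E : Fin n → ((i : Fin n) → D i) → ℝ) (W : Fin n → Fin n → ℝ) (lam : ℝ)
    (Ψ : (i : Fin n) → D i → ℝ) (i : Fin n) (x : (j : Fin n) → D j) : ℝ :=
  (1 - lam) * E i x + lam * ∑ j, W i j * Ψ j (x j)

def stateSum {n : ℕ} {D : Fin n → Type} (Ψ : (i : Fin n) → D i → ℝ)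
    (x : (i : Fin n) → D i) : ℝ :=
  ∑ i, Ψ i (x i)

section Update

variable {n : ℕ} {D : Fin n → Type} {E : Fin n → ((i : Fin n) → D i) → ℝ}
  {W : Fin n → Fin n → ℝ} {lam : ℝ} {Ψ : (i : Fin n) → D i → ℝ}

theorem sum_modifiedObjective (hW : ∀ j, ∑ i, W i j = 1) (x : (i : Fin n) → D i) :
    ∑ i, modifiedObjective E W lam Ψ i x = (1 - lam) * objective E x + lam * stateSum Ψ x := by
  have hswap : ∑ i, ∑ j, W i j * Ψ j (x j) = stateSum Ψ x := by
    rw [Finset.sum_comm]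
    exact Finset.sum_congr rfl fun j _ => by rw [← Finset.sum_mul, hW j, one_mul]
  simp only [modifiedObjective, Finset.sum_add_distrib, ← Finset.mul_sum, hswap, objective]

variable [∀ i, Fintype (D i)] [∀ i, Nonempty (D i)]

theorem coopT_apply_le (i : Fin n) (x : (j : Fin n) → D j) :
    coopT E W lam Ψ i (x i) ≤ modifiedObjective E W lam Ψ i x := by
  calc coopT E W lam Ψ i (x i)
      ≤ modifiedObjective E W lam Ψ i (Function.update x i (x i)) :=
        Finset.inf'_le _ (Finset.mem_univ x)
    _ = modifiedObjective E W lam Ψ i x := by rw [Function.update_eq_self]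

theorem stateSum_coopT_le (hW : ∀ j, ∑ i, W i j = 1) (x : (i : Fin n) → D i) :
    stateSum (coopT E W lam Ψ) x ≤ (1 - lam) * objective E x + lam * stateSum Ψ x :=
  (sum_modifiedObjective hW x).symm ▸ Finset.sum_le_sum fun i _ => coopT_apply_le i x

namespace IsConsensusState

variable {xt : (i : Fin n) → D i}

theorem coopT_apply_eq (h : IsConsensusState E W lam Ψ xt) (i : Fin n) :
    coopT E W lam Ψ i (xt i) = modifiedObjective E W lam Ψ i xt :=
  (coopT_apply_le i xt).antisymm <|
    Finset.le_inf' _ _ fun x _ => h i (Function.update x i (xt i))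

theorem stateSum_coopT_eq (h : IsConsensusState E W lam Ψ xt) (hW : ∀ j, ∑ i, W i j = 1) :
    stateSum (coopT E W lam Ψ) xt = (1 - lam) * objective E xt + lam * stateSum Ψ xt := by
  rw [← sum_modifiedObjective hW]
  exact Finset.sum_congr rfl fun i _ => h.coopT_apply_eq i

theorem stateSum_coopT_le (h : IsConsensusState E W lam Ψ xt) (hW : ∀ j, ∑ i, W i j = 1)
    (x : (i : Fin n) → D i) :
    stateSum (coopT E W lam Ψ) xt ≤ (1 - lam) * objective E x + lam * stateSum Ψ x := by
  rw [h.stateSum_coopT_eq hW, ← sum_modifiedObjective hW, ← sum_modifiedObjective hW]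
  exact Finset.sum_le_sum fun i _ => h i x

end IsConsensusState

end Update

theorem consensus_global_min_of_eps_general (n : ℕ) (D : Fin n → Type)
    [∀ i, Fintype (D i)] [∀ i, Nonempty (D i)]
    (E : Fin n → ((i : Fin n) → D i) → ℝ) (W : Fin n → Fin n → ℝ)
    (hW : IsPropagationMatrix W)
    (lam : ℕ → ℝ) (hlam : ∀ k, 0 ≤ lam k ∧ lam k < 1)
    (Psi : ℕ → (i : Fin n) → D i → ℝ)
    (hstep : ∀ k, Psi (k + 1) = coopT E W (lam (k + 1)) (Psi k))
    (hinit : (∀ i (a : D i), Psi 0 i a = 0) ∨ lam 1 = 0)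
    (xt : (i : Fin n) → D i) (k1 : ℕ) (ε : ℝ) (hε : 0 < ε)
    (heps : ∀ k, k1 ≤ k → ε ≤ 1 - lam k)
    (hcons : ∀ k, k1 ≤ k → IsConsensusState E W (lam k) (Psi (k - 1)) xt) :
    objective E xt = Finset.univ.inf' Finset.univ_nonempty (objective E) := by
  obtain ⟨-, hWcol⟩ := hW
  have hlam₀ k := (hlam k).1
  have hlam₁ k := (hlam k).2.le
  have hconsSucc (k) (hk : k1 ≤ k) : IsConsensusState E W (lam (k + 1)) (Psi k) xt :=
    hcons (k + 1) (by omega)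
  have hinit₀ (x : (i : Fin n) → D i) : lam 1 * stateSum (Psi 0) x ≤ 0 := by
    rcases hinit with h | h <;> simp [stateSum, h]
  have hbound := le_coopWeight_mul_of_step_le (Φ := fun k => stateSum (Psi k)) hlam₀
    (fun k x => hstep k ▸ stateSum_coopT_le hWcol x) hinit₀
  have hmin := le_of_eventually_step_eq hlam₀ hlam₁ hbound hε heps
    (fun k hk => hstep k ▸ (hconsSucc k hk).stateSum_coopT_eq hWcol)
    (fun k hk => hstep k ▸ (hconsSucc k hk).stateSum_coopT_le hWcol)
  exact (Finset.le_inf' _ _ fun x _ => hmin x).antisymm (Finset.inf'_le _ (Finset.mem_univ xt))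

/-- If `1 − λ_k ≥ ε > 0` for all `k ≥ k_1` and `x̃` is a consensus
solution at every iteration `k ≥ k_1` (starting from the zero initial state, or with
`λ_1 = 0`), then `E(x̃) = E*`, i.e. `x̃` is a global minimum of `E`. -/
theorem consensus_global_min_of_eps (n : ℕ) (hn : 1 ≤ n) (D : Fin n → Type)
    [∀ i, Fintype (D i)] [∀ i, Nonempty (D i)]
    (E : Fin n → ((i : Fin n) → D i) → ℝ) (W : Fin n → Fin n → ℝ)
    (hW : IsPropagationMatrix W)
    (lam : ℕ → ℝ) (hlam : ∀ k, 0 ≤ lam k ∧ lam k < 1)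
    (Psi : ℕ → (i : Fin n) → D i → ℝ)
    (hstep : ∀ k, Psi (k + 1) = coopT E W (lam (k + 1)) (Psi k))
    (hinit : (∀ i (a : D i), Psi 0 i a = 0) ∨ lam 1 = 0)
    (xt : (i : Fin n) → D i) (k1 : ℕ) (hk1 : 1 ≤ k1) (ε : ℝ) (hε : 0 < ε)
    (heps : ∀ k, k1 ≤ k → ε ≤ 1 - lam k)
    (hcons : ∀ k, k1 ≤ k → IsConsensusState E W (lam k) (Psi (k - 1)) xt) :
    objective E xt = Finset.univ.inf' Finset.univ_nonempty (objective E) :=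
  consensus_global_min_of_eps_general n D E W hW lam hlam Psi hstep hinit xt k1 ε hε heps hcons
end

section
/- Let (λ_k)_{k≥1} be a sequence in [0,1) such that the series ∑_{k=1}^∞ (1 − λ_k) diverges, let W be a propagation matrix, and let Ψ^{(0)} be an arbitrary initial state. If there exist k_0 ≥ 1 and a configuration x̃ such that x̃ is a consensus solution at iteration k_0 and remains a consensus solution at every iteration k ≥ k_0, then E(x̃) = E*, i.e., x̃ is a global minimum of E. -/
open Finset Filter Topology

/-- (Theorem 4.5) From any initial state, if the series
`∑_{k≥1} (1 − λ_k)` diverges and `x̃` is a consensus solution at iteration `k_0` and at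
every iteration thereafter, then `E(x̃) = E*`, i.e. `x̃` is a global minimum of `E`. -/
theorem consensus_global_min_of_divergent (n : ℕ) (hn : 1 ≤ n) (D : Fin n → Type)
    [∀ i, Fintype (D i)] [∀ i, Nonempty (D i)]
    (E : Fin n → ((i : Fin n) → D i) → ℝ) (W : Fin n → Fin n → ℝ)
    (hW : IsPropagationMatrix W)
    (lam : ℕ → ℝ) (hlam : ∀ k, 0 ≤ lam k ∧ lam k < 1)
    (hdiv : Tendsto (fun m => ∑ k ∈ Finset.Icc 1 m, (1 - lam k)) atTop atTop)
    (Psi : ℕ → (i : Fin n) → D i → ℝ)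
    (hstep : ∀ k, Psi (k + 1) = coopT E W (lam (k + 1)) (Psi k))
    (xt : (i : Fin n) → D i) (k0 : ℕ) (hk0 : 1 ≤ k0)
    (hcons : ∀ k, k0 ≤ k → IsConsensusState E W (lam k) (Psi (k - 1)) xt) :
    objective E xt = Finset.univ.inf' Finset.univ_nonempty (objective E) := by
  classical
  obtain ⟨hWpos, hWcol⟩ := hW
  obtain ⟨xs, -, hxs⟩ := Finset.exists_mem_eq_inf' (Finset.univ_nonempty) (objective E)
  set Estar : ℝ := Finset.univ.inf' Finset.univ_nonempty (objective E) with hEstarDef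
  set S : ℕ → ℝ := fun k => ∑ i, Psi k i (xt i) with hSdef
  set U : ℕ → ℝ := fun k => ∑ i, Psi k i (xs i) with hUdef
  -- swap lemma using unit column sums
  have hsw : ∀ (Φ : (i : Fin n) → D i → ℝ) (x : (i : Fin n) → D i),
      (∑ i, ∑ j, W i j * Φ j (x j)) = ∑ i, Φ i (x i) := by
    intro Φ x
    rw [Finset.sum_comm]
    refine Finset.sum_congr rfl fun j _ => ?_
    rw [← Finset.sum_mul, hWcol j, one_mul]
  have hre : ∀ (lamk : ℝ) (Φ : (i : Fin n) → D i → ℝ) (x : (i : Fin n) → D i),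
      (∑ i, ((1 - lamk) * E i x + lamk * ∑ j, W i j * Φ j (x j)))
        = (1 - lamk) * objective E x + lamk * ∑ i, Φ i (x i) := by
    intro lamk Φ x
    rw [Finset.sum_add_distrib, ← Finset.mul_sum, ← Finset.mul_sum, hsw Φ x]
    rfl
  -- general decrease upper bound
  have hB : ∀ (k : ℕ) (x : (i : Fin n) → D i),
      (∑ i, Psi (k + 1) i (x i))
        ≤ (1 - lam (k + 1)) * objective E x + lam (k + 1) * ∑ i, Psi k i (x i) := by
    intro k x
    have h1 : ∀ i, Psi (k + 1) i (x i)
        ≤ (1 - lam (k + 1)) * E i x + lam (k + 1) * ∑ j, W i j * Psi k j (x j) := by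
      intro i
      rw [hstep k]
      simp only [coopT]
      refine le_trans (Finset.inf'_le _ (Finset.mem_univ x)) ?_
      simp [Function.update_eq_self]
    calc (∑ i, Psi (k + 1) i (x i))
        ≤ ∑ i, ((1 - lam (k + 1)) * E i x + lam (k + 1) * ∑ j, W i j * Psi k j (x j)) :=
          Finset.sum_le_sum fun i _ => h1 i
      _ = (1 - lam (k + 1)) * objective E x + lam (k + 1) * ∑ i, Psi k i (x i) := hre _ _ _
  -- exact value at the consensus configuration
  have hA : ∀ k, k0 ≤ k → S k = (1 - lam k) * objective E xt + lam k * S (k - 1) := by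
    intro k hk
    obtain ⟨m, rfl⟩ : ∃ m, k = m + 1 := ⟨k - 1, by omega⟩
    simp only [Nat.add_sub_cancel]
    have hpt : ∀ i, Psi (m + 1) i (xt i)
        = (1 - lam (m + 1)) * E i xt + lam (m + 1) * ∑ j, W i j * Psi m j (xt j) := by
      intro i
      rw [hstep m]
      simp only [coopT]
      apply le_antisymm
      · refine le_trans (Finset.inf'_le _ (Finset.mem_univ xt)) ?_
        simp [Function.update_eq_self]
      · refine Finset.le_inf' _ _ ?_
        intro y _
        simpa using hcons (m + 1) hk i (Function.update y i (xt i))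
    calc S (m + 1)
        = ∑ i, ((1 - lam (m + 1)) * E i xt + lam (m + 1) * ∑ j, W i j * Psi m j (xt j)) :=
          Finset.sum_congr rfl fun i _ => hpt i
      _ = (1 - lam (m + 1)) * objective E xt + lam (m + 1) * ∑ i, Psi m i (xt i) := hre _ _ _
      _ = (1 - lam (m + 1)) * objective E xt + lam (m + 1) * S m := rfl
  -- consensus inequality against the global minimizer
  have hC : ∀ k, k0 ≤ k → S k ≤ (1 - lam k) * Estar + lam k * U (k - 1) := by
    intro k hk
    have hsum : (∑ i, ((1 - lam k) * E i xt + lam k * ∑ j, W i j * Psi (k - 1) j (xt j)))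
        ≤ ∑ i, ((1 - lam k) * E i xs + lam k * ∑ j, W i j * Psi (k - 1) j (xs j)) :=
      Finset.sum_le_sum fun i _ => hcons k hk i xs
    rw [hre, hre] at hsum
    rw [hA k hk, hxs]
    exact hsum
  -- the product of the cooperation strengths
  set Q : ℕ → ℝ := fun m => ∏ j ∈ Finset.range m, lam (k0 + j) with hQdef
  have hQzero : Q 0 = 1 := by rw [hQdef]; simp
  have hQsucc : ∀ m, Q (m + 1) = Q m * lam (k0 + m) := by
    intro m; rw [hQdef]; exact Finset.prod_range_succ _ _
  have hQnn : ∀ m, 0 ≤ Q m := by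
    intro m; rw [hQdef]; exact Finset.prod_nonneg fun j _ => (hlam _).1
  set A : ℝ := S (k0 - 1) - objective E xt with hAdef
  set c : ℝ := max (U (k0 - 1) - Estar) 0 with hcdef
  -- geometric contraction at the consensus configuration
  have H1 : ∀ m : ℕ, S (k0 - 1 + m) = objective E xt + Q m * A := by
    intro m
    induction m with
    | zero => simp only [Nat.add_zero, hQzero]; rw [hAdef]; ring
    | succ m ih =>
      have e1 : k0 - 1 + (m + 1) = k0 + m := by omega
      have e2 : k0 + m - 1 = k0 - 1 + m := by omega
      have h := hA (k0 + m) (Nat.le_add_right _ _)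
      rw [e2, ih] at h
      rw [e1, h, hQsucc m]
      ring
  -- geometric contraction at the global minimizer (upper bound)
  have H2 : ∀ m : ℕ, U (k0 - 1 + m) - Estar ≤ Q m * c := by
    intro m
    induction m with
    | zero =>
      simp only [Nat.add_zero, hQzero, one_mul]
      exact le_max_left _ _
    | succ m ih =>
      have e : k0 - 1 + m + 1 = k0 + m := by omega
      have hb : U (k0 - 1 + m + 1)
          ≤ (1 - lam (k0 - 1 + m + 1)) * objective E xs
            + lam (k0 - 1 + m + 1) * U (k0 - 1 + m) := hB (k0 - 1 + m) xs
      rw [e, ← hxs] at hb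
      have e' : k0 - 1 + (m + 1) = k0 + m := by omega
      rw [e', hQsucc m]
      have s1 : lam (k0 + m) * (U (k0 - 1 + m) - Estar) ≤ lam (k0 + m) * (Q m * c) :=
        mul_le_mul_of_nonneg_left ih (hlam (k0 + m)).1
      have expand : (1 - lam (k0 + m)) * Estar + lam (k0 + m) * U (k0 - 1 + m)
          = Estar + lam (k0 + m) * (U (k0 - 1 + m) - Estar) := by ring
      have eq2 : lam (k0 + m) * (Q m * c) = Q m * lam (k0 + m) * c := by ring
      linarith [hb, s1, expand, eq2]
  -- the key estimate
  have H3 : ∀ m : ℕ, objective E xt - Estar ≤ Q (m + 1) * (c + |A|) := by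
    intro m
    have e1 : k0 - 1 + (m + 1) = k0 + m := by omega
    have h1 := H1 (m + 1)
    rw [e1] at h1
    have h3 := hC (k0 + m) (Nat.le_add_right _ _)
    have e2 : k0 + m - 1 = k0 - 1 + m := by omega
    rw [e2] at h3
    have h2 := H2 m
    have s1 : lam (k0 + m) * (U (k0 - 1 + m) - Estar) ≤ Q (m + 1) * c := by
      rw [hQsucc m]
      calc lam (k0 + m) * (U (k0 - 1 + m) - Estar)
          ≤ lam (k0 + m) * (Q m * c) := mul_le_mul_of_nonneg_left h2 (hlam (k0 + m)).1
        _ = Q m * lam (k0 + m) * c := by ring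
    have s2 : -(Q (m + 1) * A) ≤ Q (m + 1) * |A| := by
      have h := mul_le_mul_of_nonneg_left (neg_le_abs A) (hQnn (m + 1))
      have h' : Q (m + 1) * -A = -(Q (m + 1) * A) := by ring
      linarith [h, h']
    have expand : (1 - lam (k0 + m)) * Estar + lam (k0 + m) * U (k0 - 1 + m)
        = Estar + lam (k0 + m) * (U (k0 - 1 + m) - Estar) := by ring
    have dist : Q (m + 1) * (c + |A|) = Q (m + 1) * c + Q (m + 1) * |A| := by ring
    linarith [h1, h3, expand, s1, s2, dist]
  -- the partial sums ∑_{j<m} (1 - lam (k0 + j)) tend to infinity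
  have hsum_eq : ∀ m : ℕ, (∑ j ∈ Finset.range m, (1 - lam (k0 + j)))
      = (∑ k ∈ Finset.Icc 1 (k0 - 1 + m), (1 - lam k))
        - ∑ k ∈ Finset.Icc 1 (k0 - 1), (1 - lam k) := by
    intro m
    have h1 : Finset.Icc 1 (k0 - 1 + m) = Finset.Ico 1 (k0 + m) := by
      rw [← Finset.Ico_add_one_right_eq_Icc]; congr 1; omega
    have h2 : Finset.Icc 1 (k0 - 1) = Finset.Ico 1 k0 := by
      rw [← Finset.Ico_add_one_right_eq_Icc]; congr 1; omega
    rw [h1, h2, ← Finset.sum_Ico_consecutive (fun k => (1 : ℝ) - lam k) hk0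
      (Nat.le_add_right k0 m), Finset.sum_Ico_eq_sum_range, Finset.sum_Ico_eq_sum_range, Nat.add_sub_cancel_left]
    ring
  have hmono : Tendsto (fun m : ℕ => k0 - 1 + m) atTop atTop :=
    tendsto_atTop_atTop.mpr fun b => ⟨b, fun a ha => le_trans ha (Nat.le_add_left a _)⟩
  have htsum : Tendsto (fun m => ∑ j ∈ Finset.range m, (1 - lam (k0 + j))) atTop atTop := by
    have hfe : (fun m => ∑ j ∈ Finset.range m, (1 - lam (k0 + j)))
        = fun m => ((fun M => ∑ k ∈ Finset.Icc 1 M, (1 - lam k)) ∘ fun m => k0 - 1 + m) m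
            + -(∑ k ∈ Finset.Icc 1 (k0 - 1), (1 - lam k)) := by
      funext m
      simp only [Function.comp]
      rw [hsum_eq m]
      ring
    rw [hfe]
    exact tendsto_atTop_add_const_right atTop _ (hdiv.comp hmono)
  have hQle : ∀ m, Q m ≤ Real.exp (-(∑ j ∈ Finset.range m, (1 - lam (k0 + j)))) := by
    intro m
    rw [hQdef]
    calc (∏ j ∈ Finset.range m, lam (k0 + j))
        ≤ ∏ j ∈ Finset.range m, Real.exp (lam (k0 + j) - 1) := by
          refine Finset.prod_le_prod (fun j _ => (hlam _).1) (fun j _ => ?_)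
          have := Real.add_one_le_exp (lam (k0 + j) - 1)
          linarith
      _ = Real.exp (∑ j ∈ Finset.range m, (lam (k0 + j) - 1)) := (Real.exp_sum _ _).symm
      _ = Real.exp (-(∑ j ∈ Finset.range m, (1 - lam (k0 + j)))) := by
          congr 1
          rw [← Finset.sum_neg_distrib]
          exact Finset.sum_congr rfl fun j _ => by ring
  have hQtends : Tendsto Q atTop (𝓝 0) :=
    squeeze_zero hQnn hQle
      (Real.tendsto_exp_atBot.comp (tendsto_neg_atTop_atBot.comp htsum))
  have hfin : Tendsto (fun m : ℕ => Q (m + 1) * (c + |A|)) atTop (𝓝 0) := by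
    have h1 : Tendsto (fun m : ℕ => Q (m + 1)) atTop (𝓝 0) :=
      hQtends.comp (tendsto_add_atTop_nat 1)
    simpa using h1.mul_const (c + |A|)
  have hle : objective E xt - Estar ≤ 0 := ge_of_tendsto' hfin H3
  have hge : Estar ≤ objective E xt := Finset.inf'_le _ (Finset.mem_univ xt)
  exact le_antisymm (by linarith) hge
end

section
/- Let λ ∈ [0,1), let W be a propagation matrix, and let Ψ^{(∞)} be a fixed point of the basic cooperative optimization update T_λ. If x̃ is a configuration such that, for every i ∈ {1,…,n}, x̃ globally minimizes the function x ↦ (1−λ) E_i(x) + λ ∑_{j=1}^n w_{ij} Ψ^{(∞)}_j(x_j) over all configurations, then E(x̃) = ∑_{i=1}^n Ψ^{(∞)}_i(x̃_i), i.e., the objective value at the consensus solution equals the value of the equilibrium lower bound function there. -/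
/-!
At a consensus solution `x̃` the minimum defining `T_λ(Ψ)_i(x̃_i)` is attained at `x̃` itself, so
the fixed-point equations evaluated at `x̃` read
`Ψ_i(x̃_i) = (1 - λ) E_i(x̃) + λ ∑_j w_{ij} Ψ_j(x̃_j)`.
Summing over `i` and using that the columns of `W` sum to one gives
`∑ Ψ_i(x̃_i) = (1 - λ) E(x̃) + λ ∑ Ψ_i(x̃_i)`, and `λ ≠ 1` lets us cancel.
-/

open Finset Filter Topology

theorem Finset.sum_sum_mul_eq_of_sum_col_eq_one {ι R : Type*} [Fintype ι] [CommSemiring R]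
    {W : ι → ι → R} (hW : ∀ j, ∑ i, W i j = 1) (f : ι → R) :
    ∑ i, ∑ j, W i j * f j = ∑ j, f j := by
  rw [Finset.sum_comm]
  exact Finset.sum_congr rfl fun j _ => by rw [← Finset.sum_mul, hW j, one_mul]

section CooperativeOptimization

variable {n : ℕ} {D : Fin n → Type} [∀ i, Fintype (D i)] [∀ i, Nonempty (D i)]
  {E : Fin n → ((i : Fin n) → D i) → ℝ} {W : Fin n → Fin n → ℝ} {lam : ℝ}
  {Ψ : (i : Fin n) → D i → ℝ} {xt : (i : Fin n) → D i}

theorem IsConsensusState.coopT_apply (hcons : IsConsensusState E W lam Ψ xt) (i : Fin n) :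
    coopT E W lam Ψ i (xt i) = (1 - lam) * E i xt + lam * ∑ j, W i j * Ψ j (xt j) := by
  apply le_antisymm
  · refine (Finset.inf'_le _ (Finset.mem_univ xt)).trans_eq ?_
    simp only [Function.update_eq_self]
  · exact Finset.le_inf' _ _ fun x _ => by simpa using hcons i (Function.update x i (xt i))

theorem IsConsensusState.sum_eq_of_coopT_eq_self (hW : ∀ j, ∑ i, W i j = 1)
    (hfix : coopT E W lam Ψ = Ψ) (hcons : IsConsensusState E W lam Ψ xt) :
    ∑ i, Ψ i (xt i) = (1 - lam) * objective E xt + lam * ∑ i, Ψ i (xt i) := by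
  calc ∑ i, Ψ i (xt i)
      = ∑ i, ((1 - lam) * E i xt + lam * ∑ j, W i j * Ψ j (xt j)) :=
        Finset.sum_congr rfl fun i _ => by rw [← hcons.coopT_apply i, hfix]
    _ = (1 - lam) * objective E xt + lam * ∑ i, ∑ j, W i j * Ψ j (xt j) := by
        rw [Finset.sum_add_distrib, ← Finset.mul_sum, ← Finset.mul_sum, objective]
    _ = (1 - lam) * objective E xt + lam * ∑ i, Ψ i (xt i) := by
        rw [Finset.sum_sum_mul_eq_of_sum_col_eq_one hW]

end CooperativeOptimization

theorem consensus_touches_lower_bound_general (n : ℕ) (D : Fin n → Type)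
    [∀ i, Fintype (D i)] [∀ i, Nonempty (D i)]
    (E : Fin n → ((i : Fin n) → D i) → ℝ) (W : Fin n → Fin n → ℝ)
    (hW : IsPropagationMatrix W) (lam : ℝ) (hlam1 : lam < 1)
    (Ψinf : (i : Fin n) → D i → ℝ) (hfix : coopT E W lam Ψinf = Ψinf)
    (xt : (i : Fin n) → D i) (hcons : IsConsensusState E W lam Ψinf xt) :
    objective E xt = ∑ i, Ψinf i (xt i) := by
  have hsum := hcons.sum_eq_of_coopT_eq_self hW.2 hfix
  have hscaled : (1 - lam) * objective E xt = (1 - lam) * ∑ i, Ψinf i (xt i) := by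
    linarith
  exact mul_left_cancel₀ (sub_ne_zero.mpr hlam1.ne') hscaled

/-- At a fixed point `Ψ^{(∞)}` of `T_λ`, the objective value at a
consensus solution equals the value of the equilibrium lower bound function there:
`E(x̃) = ∑_i Ψ^{(∞)}_i(x̃_i)`. -/
theorem consensus_touches_lower_bound (n : ℕ) (hn : 1 ≤ n) (D : Fin n → Type)
    [∀ i, Fintype (D i)] [∀ i, Nonempty (D i)]
    (E : Fin n → ((i : Fin n) → D i) → ℝ) (W : Fin n → Fin n → ℝ)
    (hW : IsPropagationMatrix W) (lam : ℝ) (hlam0 : 0 ≤ lam) (hlam1 : lam < 1)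
    (Ψinf : (i : Fin n) → D i → ℝ) (hfix : coopT E W lam Ψinf = Ψinf)
    (xt : (i : Fin n) → D i) (hcons : IsConsensusState E W lam Ψinf xt) :
    objective E xt = ∑ i, Ψinf i (xt i) :=
  consensus_touches_lower_bound_general n D E W hW lam hlam1 Ψinf hfix xt hcons
end

section
/- Let λ ∈ [0,1) be a constant cooperation strength, W a propagation matrix, and suppose every sub-objective E_i is nonnegative (E_i(x) ≥ 0 for all configurations x). Starting from the initial state Ψ^{(0)}_i ≡ 0 for every i and iterating Ψ^{(k)} = T_λ(Ψ^{(k−1)}), the sequence of lower bound functions is monotonically nondecreasing: for every k ≥ 0 and every configuration x, ∑_{i=1}^n Ψ^{(k)}_i(x_i) ≤ ∑_{i=1}^n Ψ^{(k+1)}_i(x_i). -/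
open Finset Filter Topology

/-!
The update `T_λ` is monotone in the state, because the state enters each minimised expression
with the nonnegative weights `λ w_{ij}`. Nonnegativity of the `E_i` gives `0 ≤ T_λ(0)`, i.e.
`Ψ⁽⁰⁾ ≤ Ψ⁽¹⁾` pointwise, and applying the monotone map `T_λ` repeatedly propagates this to
`Ψ⁽ᵏ⁾ ≤ Ψ⁽ᵏ⁺¹⁾` for all `k`; summing over `i` gives the claim.
-/

section CoopT

variable {n : ℕ} {D : Fin n → Type} [∀ i, Fintype (D i)] [∀ i, Nonempty (D i)]
  (E : Fin n → ((i : Fin n) → D i) → ℝ) {W : Fin n → Fin n → ℝ} {lam : ℝ}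

theorem coopT_monotone (hW : ∀ i j, 0 ≤ W i j) (hlam : 0 ≤ lam) :
    Monotone (coopT E W lam) := by
  intro Ψ Φ hΨΦ i a
  refine Finset.le_inf' _ _ fun x hx => Finset.inf'_le_of_le _ hx ?_
  gcongr with j
  · exact hW i j
  · exact hΨΦ j _

theorem coopT_nonneg (hE : ∀ i x, 0 ≤ E i x) (hW : ∀ i j, 0 ≤ W i j) (hlam0 : 0 ≤ lam)
    (hlam1 : lam ≤ 1) {Ψ : (i : Fin n) → D i → ℝ} (hΨ : 0 ≤ Ψ) :
    0 ≤ coopT E W lam Ψ := by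
  intro i a
  refine Finset.le_inf' _ _ fun x _ => ?_
  have hsum : 0 ≤ ∑ j, W i j * Ψ j (Function.update x i a j) :=
    Finset.sum_nonneg fun j _ => mul_nonneg (hW i j) (hΨ j _)
  have := hE i (Function.update x i a)
  positivity

end CoopT

theorem lower_bounds_monotone_general (n : ℕ) (D : Fin n → Type)
    [∀ i, Fintype (D i)] [∀ i, Nonempty (D i)]
    (E : Fin n → ((i : Fin n) → D i) → ℝ)
    (hE : ∀ i (x : (j : Fin n) → D j), 0 ≤ E i x)
    (W : Fin n → Fin n → ℝ) (hW : IsPropagationMatrix W)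
    (lam : ℝ) (hlam0 : 0 ≤ lam) (hlam1 : lam < 1)
    (Psi : ℕ → (i : Fin n) → D i → ℝ)
    (hinit : ∀ i (a : D i), Psi 0 i a = 0)
    (hstep : ∀ k, Psi (k + 1) = coopT E W lam (Psi k)) :
    ∀ (k : ℕ) (x : (i : Fin n) → D i),
      ∑ i, Psi k i (x i) ≤ ∑ i, Psi (k + 1) i (x i) := by
  have hzero : Psi 0 = 0 := funext₂ hinit
  have hstate_mono : ∀ k, Psi k ≤ Psi (k + 1) := by
    intro k
    induction k with
    | zero =>
      rw [hstep, hzero]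
      exact coopT_nonneg E hE hW.1 hlam0 hlam1.le le_rfl
    | succ k ih =>
      simpa only [← hstep] using coopT_monotone E hW.1 hlam0 ih
  intro k x
  exact Finset.sum_le_sum fun i _ => hstate_mono k i (x i)

/-- With nonnegative sub-objectives and the zero initial state, the
sequence of lower bound functions produced by iterating `T_λ` is monotonically
nondecreasing. -/
theorem lower_bounds_monotone (n : ℕ) (hn : 1 ≤ n) (D : Fin n → Type)
    [∀ i, Fintype (D i)] [∀ i, Nonempty (D i)]
    (E : Fin n → ((i : Fin n) → D i) → ℝ)
    (hE : ∀ i (x : (j : Fin n) → D j), 0 ≤ E i x)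
    (W : Fin n → Fin n → ℝ) (hW : IsPropagationMatrix W)
    (lam : ℝ) (hlam0 : 0 ≤ lam) (hlam1 : lam < 1)
    (Psi : ℕ → (i : Fin n) → D i → ℝ)
    (hinit : ∀ i (a : D i), Psi 0 i a = 0)
    (hstep : ∀ k, Psi (k + 1) = coopT E W lam (Psi k)) :
    ∀ (k : ℕ) (x : (i : Fin n) → D i),
      ∑ i, Psi k i (x i) ≤ ∑ i, Psi (k + 1) i (x i) :=
  lower_bounds_monotone_general n D E hE W hW lam hlam0 hlam1 Psi hinit hstep
end
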